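/- Let Y = Φ∘X be the inverse surface of X under inversion Φ[c,r], with λ = r²/‖X−c‖² and η = ⟨U_X, X−c⟩. Then the mean curvatures satisfy H_Y = −λ⁻¹H_X − 2η/r². -/

import Mathlib

/-!
The inversion `Φ = inversion c r` is conformal: `DΦ(x) = λ(x) R_x` with `λ(x) = r²/‖x - c‖²` and
`R_x` the reflection in the hyperplane orthogonal to `x - c`. Hence the first fundamental form of
`Y = Φ ∘ X` is `λ²` times that of `X`. Writing `Y - c = λ (X - c)`, the second
derivatives of `Y` are `λ X_ij + λ_j X_i + λ_i X_j + λ_ij (X - c)`; differentiating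
`λ ‖X - c‖² = r²` twice eliminates `λ_ij`, and the second fundamental form of `Y` comes out as
`-λ (h_X + (2η/‖X - c‖²) g_X)`. The mean curvature is linear in the second fundamental form and
scales like the inverse of the first, which gives `H_Y = -λ⁻¹ H_X - 2η/r²`.
-/

open RealInnerProductSpace EuclideanGeometry

section Leibniz

variable {𝕜 E F G H : Type*} [NontriviallyNormedField 𝕜]
  [NormedAddCommGroup E] [NormedSpace 𝕜 E] [NormedAddCommGroup F] [NormedSpace 𝕜 F]
  [NormedAddCommGroup G] [NormedSpace 𝕜 G] [NormedAddCommGroup H] [NormedSpace 𝕜 H]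

theorem ContDiff.differentiable_fderiv_apply {f : E → F} (hf : ContDiff 𝕜 2 f) (w : E) :
    Differentiable 𝕜 (fun p => fderiv 𝕜 f p w) :=
  ((hf.fderiv_right (m := 1) (by norm_num)).differentiable one_ne_zero).clm_apply
    (differentiable_const w)

theorem ContinuousLinearMap.fderiv_of_bilinear_apply (B : F →L[𝕜] G →L[𝕜] H) {f : E → F}
    {g : E → G} {x : E} (hf : DifferentiableAt 𝕜 f x) (hg : DifferentiableAt 𝕜 g x) (w : E) :
    fderiv 𝕜 (fun y => B (f y) (g y)) x w = B (f x) (fderiv 𝕜 g x w) + B (fderiv 𝕜 f x w) (g x) := by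
  simp [B.fderiv_of_bilinear hf hg]

theorem ContinuousLinearMap.fderiv_fderiv_of_bilinear_apply (B : F →L[𝕜] G →L[𝕜] H)
    {f : E → F} {g : E → G} (hf : ContDiff 𝕜 2 f) (hg : ContDiff 𝕜 2 g) (x w w' : E) :
    fderiv 𝕜 (fun p => fderiv 𝕜 (fun y => B (f y) (g y)) p w) x w' =
      B (f x) (fderiv 𝕜 (fun p => fderiv 𝕜 g p w) x w') + B (fderiv 𝕜 f x w') (fderiv 𝕜 g x w)
        + (B (fderiv 𝕜 f x w) (fderiv 𝕜 g x w') + B (fderiv 𝕜 (fun p => fderiv 𝕜 f p w) x w') (g x)) := by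
  have hf1 := hf.differentiable two_ne_zero
  have hg1 := hg.differentiable two_ne_zero
  have hf2 := hf.differentiable_fderiv_apply w
  have hg2 := hg.differentiable_fderiv_apply w
  simp_rw [B.fderiv_of_bilinear_apply (hf1 _) (hg1 _)]
  rw [fderiv_fun_add (B.hasFDerivAt_of_bilinear (hf1 x).hasFDerivAt (hg2 x).hasFDerivAt).differentiableAt
    (B.hasFDerivAt_of_bilinear (hf2 x).hasFDerivAt (hg1 x).hasFDerivAt).differentiableAt]
  rw [add_apply, B.fderiv_of_bilinear_apply (hf1 x) (hg2 x),
    B.fderiv_of_bilinear_apply (hf2 x) (hg1 x)]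

theorem fderiv_fderiv_smul_apply {f : E → 𝕜} {g : E → F} (hf : ContDiff 𝕜 2 f)
    (hg : ContDiff 𝕜 2 g) (x w w' : E) :
    fderiv 𝕜 (fun p => fderiv 𝕜 (fun y => f y • g y) p w) x w' =
      f x • fderiv 𝕜 (fun p => fderiv 𝕜 g p w) x w' + fderiv 𝕜 f x w' • fderiv 𝕜 g x w
        + (fderiv 𝕜 f x w • fderiv 𝕜 g x w' + fderiv 𝕜 (fun p => fderiv 𝕜 f p w) x w' • g x) := by
  simpa using (ContinuousLinearMap.lsmul 𝕜 𝕜).fderiv_fderiv_of_bilinear_apply hf hg x w w'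

end Leibniz

section Inversion

variable {E F : Type*} [NormedAddCommGroup E] [NormedSpace ℝ E]
  [NormedAddCommGroup F] [InnerProductSpace ℝ F]

theorem fderiv_fderiv_inner_apply {f g : E → F} (hf : ContDiff ℝ 2 f) (hg : ContDiff ℝ 2 g)
    (x w w' : E) :
    fderiv ℝ (fun p => fderiv ℝ (fun y => ⟪f y, g y⟫) p w) x w' =
      ⟪f x, fderiv ℝ (fun p => fderiv ℝ g p w) x w'⟫ + ⟪fderiv ℝ f x w', fderiv ℝ g x w⟫
        + (⟪fderiv ℝ f x w, fderiv ℝ g x w'⟫ + ⟪fderiv ℝ (fun p => fderiv ℝ f p w) x w', g x⟫) :=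
  (innerSL ℝ).fderiv_fderiv_of_bilinear_apply hf hg x w w'

theorem EuclideanGeometry.inversion_eq_add_smul (c : F) (R : ℝ) (x : F) :
    inversion c R x = c + (R ^ 2 / ‖x - c‖ ^ 2) • (x - c) := by
  rw [inversion, dist_eq_norm, div_pow, vsub_eq_sub, vadd_eq_add, add_comm]

variable (c : F) (r : ℝ) {X : E → F}

theorem inner_fderiv_inversion_comp (hX : Differentiable ℝ X) (hXc : ∀ p, X p ≠ c) (q w w' : E) :
    ⟪fderiv ℝ (inversion c r ∘ X) q w, fderiv ℝ (inversion c r ∘ X) q w'⟫ =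
      (r ^ 2 / ‖X q - c‖ ^ 2) ^ 2 * ⟪fderiv ℝ X q w, fderiv ℝ X q w'⟫ := by
  rw [((hasFDerivAt_inversion (hXc q)).comp q (hX q).hasFDerivAt).fderiv]
  simp only [dist_eq_norm, div_pow, ContinuousLinearMap.smul_comp, smul_apply,
    ContinuousLinearMap.comp_apply, ContinuousLinearEquiv.coe_coe,
    LinearIsometryEquiv.coe_toContinuousLinearEquiv, real_inner_smul_right, real_inner_smul_left,
    LinearIsometryEquiv.inner_map_map]
  ring

theorem exists_fderiv_fderiv_inversion_comp_eq (hX : ContDiff ℝ 2 X) (hXc : ∀ p, X p ≠ c)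
    (q w w' : E) :
    ∃ α β γ : ℝ, fderiv ℝ (fun p => fderiv ℝ (inversion c r ∘ X) p w) q w' =
        (r ^ 2 / ‖X q - c‖ ^ 2) • fderiv ℝ (fun p => fderiv ℝ X p w) q w'
          + α • fderiv ℝ X q w + (β • fderiv ℝ X q w' + γ • (X q - c)) ∧
      r ^ 2 / ‖X q - c‖ ^ 2 * (2 * ⟪X q - c, fderiv ℝ (fun p => fderiv ℝ X p w) q w'⟫
          + 2 * ⟪fderiv ℝ X q w, fderiv ℝ X q w'⟫)
        + α * (2 * ⟪X q - c, fderiv ℝ X q w⟫) + β * (2 * ⟪X q - c, fderiv ℝ X q w'⟫)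
        + γ * ‖X q - c‖ ^ 2 = 0 := by
  obtain ⟨v, hv_def⟩ : ∃ v : E → F, v = fun p => X p - c := ⟨_, rfl⟩
  obtain ⟨ρ, hρ_def⟩ : ∃ ρ : E → ℝ, ρ = fun p => ⟪v p, v p⟫ := ⟨_, rfl⟩
  obtain ⟨μ, hμ_def⟩ : ∃ μ : E → ℝ, μ = fun p => r ^ 2 / ρ p := ⟨_, rfl⟩
  have hρ0 : ∀ p, ρ p ≠ 0 := fun p => by simpa [hρ_def, hv_def, sub_eq_zero] using hXc p
  have hv : ContDiff ℝ 2 v := hv_def ▸ hX.sub contDiff_const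
  have hρ : ContDiff ℝ 2 ρ := hρ_def ▸ hv.inner ℝ hv
  have hμ : ContDiff ℝ 2 μ := hμ_def ▸ contDiff_const.div hρ hρ0
  have hDv : ∀ p, fderiv ℝ v p = fderiv ℝ X p := fun p => hv_def ▸ fderiv_sub_const c
  have hvq : X q - c = v q := by rw [hv_def]
  have hρq : ‖v q‖ ^ 2 = ρ q := by rw [hρ_def, ← real_inner_self_eq_norm_sq]
  have hμq : r ^ 2 / ρ q = μ q := by rw [hμ_def]
  have hY : inversion c r ∘ X = fun y => c + μ y • v y := by
    funext y
    simp [inversion_eq_add_smul, hμ_def, hρ_def, hv_def]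
  have hDρ : ∀ u, fderiv ℝ ρ q u = 2 * ⟪v q, fderiv ℝ X q u⟫ := fun u => by
    rw [hρ_def, fderiv_inner_apply ℝ ((hv.differentiable two_ne_zero) q)
      ((hv.differentiable two_ne_zero) q), hDv, real_inner_comm, two_mul]
  have hD2ρ := fderiv_fderiv_inner_apply hv hv q w w'
  simp only [← hρ_def, hDv] at hD2ρ
  -- the relation between the coefficients is the second derivative of `μ ρ = r²`
  have hD2μρ := fderiv_fderiv_smul_apply hμ hρ q w w'
  have hμρ : (fun y => μ y • ρ y) = fun _ => r ^ 2 :=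
    funext fun y => by simp [hμ_def, hρ0 y]
  rw [hμρ] at hD2μρ
  simp only [fderiv_fun_const, Pi.zero_apply, zero_apply, hD2ρ, smul_eq_mul, hDρ] at hD2μρ
  refine ⟨fderiv ℝ μ q w', fderiv ℝ μ q w, fderiv ℝ (fun p => fderiv ℝ μ p w) q w', ?_, ?_⟩
  · simp only [hY, fderiv_const_add, fderiv_fderiv_smul_apply hμ hv, hDv, hvq, hρq, hμq]
  · rw [hvq, hρq, hμq]
    linear_combination -hD2μρ
      + μ q * real_inner_comm (fderiv ℝ (fun p => fderiv ℝ X p w) q w') (v q)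
      + μ q * real_inner_comm (fderiv ℝ X q w') (fderiv ℝ X q w)

theorem inner_fderiv_fderiv_inversion_comp (hX : ContDiff ℝ 2 X) (hXc : ∀ p, X p ≠ c)
    (q w w' : E) {U : F} (hUw : ⟪fderiv ℝ X q w, U⟫ = 0) (hUw' : ⟪fderiv ℝ X q w', U⟫ = 0) :
    ⟪fderiv ℝ (fun p => fderiv ℝ (inversion c r ∘ X) p w) q w',
        -U + (2 * ⟪U, X q - c⟫ / ‖X q - c‖ ^ 2) • (X q - c)⟫ =
      -(r ^ 2 / ‖X q - c‖ ^ 2) * (⟪fderiv ℝ (fun p => fderiv ℝ X p w) q w', U⟫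
        + 2 * ⟪U, X q - c⟫ / ‖X q - c‖ ^ 2 * ⟪fderiv ℝ X q w, fderiv ℝ X q w'⟫) := by
  obtain ⟨α, β, γ, hD2Y, hcoeff⟩ := exists_fderiv_fderiv_inversion_comp_eq c r hX hXc q w w'
  have hv0 : ‖X q - c‖ ≠ 0 := by simpa [sub_eq_zero] using hXc q
  rw [hD2Y]
  set v := X q - c
  set A := fderiv ℝ (fun p => fderiv ℝ X p w) q w'
  set a := fderiv ℝ X q w
  set b := fderiv ℝ X q w'
  simp only [inner_add_left, inner_add_right, inner_neg_right, real_inner_smul_left,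
    real_inner_smul_right, hUw, hUw', real_inner_comm v A, real_inner_comm v a,
    real_inner_comm v b, real_inner_comm U v, real_inner_self_eq_norm_sq]
  linear_combination (norm := skip) (⟪U, v⟫ / ‖v‖ ^ 2) * hcoeff
  field_simp
  ring

end Inversion

noncomputable def meanCurvature (E F G e f g : ℝ) : ℝ :=
  (e * G - 2 * f * F + g * E) / (2 * (E * G - F ^ 2))

theorem meanCurvature_mul_add {E F G e f g : ℝ} (hEFG : E * G - F ^ 2 ≠ 0) {k : ℝ} (hk : k ≠ 0)
    (a b : ℝ) :
    meanCurvature (k * E) (k * F) (k * G) (a * e + b * E) (a * f + b * F) (a * g + b * G) =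
      (a * meanCurvature E F G e f g + b) / k := by
  unfold meanCurvature
  field_simp
  ring

theorem inverse_surface_mean_curvature_general
    (c : EuclideanSpace ℝ (Fin 3)) (r : ℝ) (hr : 0 < r)
    (Φ : EuclideanSpace ℝ (Fin 3) → EuclideanSpace ℝ (Fin 3))
    (hΦ : ∀ p, Φ p = c + (r ^ 2 / ‖p - c‖ ^ 2) • (p - c))
    (X : ℝ × ℝ → EuclideanSpace ℝ (Fin 3)) (hX : ContDiff ℝ 2 X)
    (hXc : ∀ q, X q ≠ c)
    (Y : ℝ × ℝ → EuclideanSpace ℝ (Fin 3)) (hY : Y = Φ ∘ X)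
    (q : ℝ × ℝ)
    -- first and second partial derivatives of X and Y at q
    (Xs Xu Xss Xsu Xuu Ys Yu Yss Ysu Yuu UX UY : EuclideanSpace ℝ (Fin 3))
    (hXs : Xs = fderiv ℝ X q (1, 0)) (hXu : Xu = fderiv ℝ X q (0, 1))
    (hXss : Xss = fderiv ℝ (fun p => fderiv ℝ X p (1, 0)) q (1, 0))
    (hXsu : Xsu = fderiv ℝ (fun p => fderiv ℝ X p (1, 0)) q (0, 1))
    (hXuu : Xuu = fderiv ℝ (fun p => fderiv ℝ X p (0, 1)) q (0, 1))
    (hYs : Ys = fderiv ℝ Y q (1, 0)) (hYu : Yu = fderiv ℝ Y q (0, 1))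
    (hYss : Yss = fderiv ℝ (fun p => fderiv ℝ Y p (1, 0)) q (1, 0))
    (hYsu : Ysu = fderiv ℝ (fun p => fderiv ℝ Y p (1, 0)) q (0, 1))
    (hYuu : Yuu = fderiv ℝ (fun p => fderiv ℝ Y p (0, 1)) q (0, 1))
    -- UX is the unit normal of X at q; UY is the appropriately oriented
    -- unit normal of the inverse patch Y at q
    (hUXs : ⟪Xs, UX⟫ = 0) (hUXu : ⟪Xu, UX⟫ = 0)
    (hUY : UY = -UX + (2 * ⟪UX, X q - c⟫ / ‖X q - c‖ ^ 2) • (X q - c))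
    -- fundamental form coefficients of X and Y at q
    (EX FX GX eX fX gX EY FY GY eY fY gY lam eta HX HY : ℝ)
    (hEX : EX = ⟪Xs, Xs⟫) (hFX : FX = ⟪Xs, Xu⟫) (hGX : GX = ⟪Xu, Xu⟫)
    (heX : eX = ⟪Xss, UX⟫) (hfX : fX = ⟪Xsu, UX⟫) (hgX : gX = ⟪Xuu, UX⟫)
    (hEY : EY = ⟪Ys, Ys⟫) (hFY : FY = ⟪Ys, Yu⟫) (hGY : GY = ⟪Yu, Yu⟫)
    (heY : eY = ⟪Yss, UY⟫) (hfY : fY = ⟪Ysu, UY⟫) (hgY : gY = ⟪Yuu, UY⟫)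
    -- regularity of X at q
    (hreg : 0 < EX * GX - FX ^ 2)
    (hlam : lam = r ^ 2 / ‖X q - c‖ ^ 2) (heta : eta = ⟪UX, X q - c⟫)
    (hHX : HX = (eX * GX - 2 * fX * FX + gX * EX) / (2 * (EX * GX - FX ^ 2)))
    (hHY : HY = (eY * GY - 2 * fY * FY + gY * EY) / (2 * (EY * GY - FY ^ 2))) :
    HY = -lam⁻¹ * HX - 2 * eta / r ^ 2 := by
  rw [show Φ = inversion c r from funext fun p => by rw [hΦ, inversion_eq_add_smul]] at hY
  subst hY hXs hXu hXss hXsu hXuu hUY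
  set μ := r ^ 2 / ‖X q - c‖ ^ 2
  set κ := 2 * ⟪UX, X q - c⟫ / ‖X q - c‖ ^ 2
  have hv0 : ‖X q - c‖ ≠ 0 := by simpa [sub_eq_zero] using hXc q
  have hX1 := hX.differentiable two_ne_zero
  have hEY' : EY = μ ^ 2 * EX := by rw [hEY, hYs, hEX, inner_fderiv_inversion_comp c r hX1 hXc]
  have hFY' : FY = μ ^ 2 * FX := by
    rw [hFY, hYs, hYu, hFX, inner_fderiv_inversion_comp c r hX1 hXc]
  have hGY' : GY = μ ^ 2 * GX := by rw [hGY, hYu, hGX, inner_fderiv_inversion_comp c r hX1 hXc]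
  have heY' : eY = -μ * eX + -μ * κ * EX := by
    rw [heY, hYss, inner_fderiv_fderiv_inversion_comp c r hX hXc q _ _ hUXs hUXs, heX, hEX]
    ring
  have hfY' : fY = -μ * fX + -μ * κ * FX := by
    rw [hfY, hYsu, inner_fderiv_fderiv_inversion_comp c r hX hXc q _ _ hUXs hUXu, hfX, hFX]
    ring
  have hgY' : gY = -μ * gX + -μ * κ * GX := by
    rw [hgY, hYuu, inner_fderiv_fderiv_inversion_comp c r hX hXc q _ _ hUXu hUXu, hgX, hGX]
    ring
  calc HY = meanCurvature EY FY GY eY fY gY := hHY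
    _ = (-μ * HX + -μ * κ) / μ ^ 2 := by
      rw [hEY', hFY', hGY', heY', hfY', hgY', meanCurvature_mul_add hreg.ne' (by positivity), hHX]
      rfl
    _ = -lam⁻¹ * HX - 2 * eta / r ^ 2 := by
      rw [hlam, heta]
      simp only [μ, κ]
      field_simp
      ring

/-- For the inverse surface `Y = Φ∘X` under the inversion `Φ[c,r]`, with `λ = r²/‖X−c‖²`
and `η = ⟨U_X, X−c⟩`, the mean curvatures satisfy `H_Y = −λ⁻¹H_X − 2η/r²`. -/
theorem inverse_surface_mean_curvature
    (c : EuclideanSpace ℝ (Fin 3)) (r : ℝ) (hr : 0 < r)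
    (Φ : EuclideanSpace ℝ (Fin 3) → EuclideanSpace ℝ (Fin 3))
    (hΦ : ∀ p, Φ p = c + (r ^ 2 / ‖p - c‖ ^ 2) • (p - c))
    (X : ℝ × ℝ → EuclideanSpace ℝ (Fin 3)) (hX : ContDiff ℝ 2 X)
    (hXc : ∀ q, X q ≠ c)
    (Y : ℝ × ℝ → EuclideanSpace ℝ (Fin 3)) (hY : Y = Φ ∘ X)
    (q : ℝ × ℝ)
    -- first and second partial derivatives of X and Y at q
    (Xs Xu Xss Xsu Xuu Ys Yu Yss Ysu Yuu UX UY : EuclideanSpace ℝ (Fin 3))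
    (hXs : Xs = fderiv ℝ X q (1, 0)) (hXu : Xu = fderiv ℝ X q (0, 1))
    (hXss : Xss = fderiv ℝ (fun p => fderiv ℝ X p (1, 0)) q (1, 0))
    (hXsu : Xsu = fderiv ℝ (fun p => fderiv ℝ X p (1, 0)) q (0, 1))
    (hXuu : Xuu = fderiv ℝ (fun p => fderiv ℝ X p (0, 1)) q (0, 1))
    (hYs : Ys = fderiv ℝ Y q (1, 0)) (hYu : Yu = fderiv ℝ Y q (0, 1))
    (hYss : Yss = fderiv ℝ (fun p => fderiv ℝ Y p (1, 0)) q (1, 0))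
    (hYsu : Ysu = fderiv ℝ (fun p => fderiv ℝ Y p (1, 0)) q (0, 1))
    (hYuu : Yuu = fderiv ℝ (fun p => fderiv ℝ Y p (0, 1)) q (0, 1))
    -- UX is the unit normal of X at q; UY is the appropriately oriented
    -- unit normal of the inverse patch Y at q
    (hUXunit : ‖UX‖ = 1) (hUXs : ⟪Xs, UX⟫ = 0) (hUXu : ⟪Xu, UX⟫ = 0)
    (hUY : UY = -UX + (2 * ⟪UX, X q - c⟫ / ‖X q - c‖ ^ 2) • (X q - c))
    -- fundamental form coefficients of X and Y at q
    (EX FX GX eX fX gX EY FY GY eY fY gY lam eta KX HX KY HY : ℝ)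
    (hEX : EX = ⟪Xs, Xs⟫) (hFX : FX = ⟪Xs, Xu⟫) (hGX : GX = ⟪Xu, Xu⟫)
    (heX : eX = ⟪Xss, UX⟫) (hfX : fX = ⟪Xsu, UX⟫) (hgX : gX = ⟪Xuu, UX⟫)
    (hEY : EY = ⟪Ys, Ys⟫) (hFY : FY = ⟪Ys, Yu⟫) (hGY : GY = ⟪Yu, Yu⟫)
    (heY : eY = ⟪Yss, UY⟫) (hfY : fY = ⟪Ysu, UY⟫) (hgY : gY = ⟪Yuu, UY⟫)
    -- regularity of X at q
    (hreg : 0 < EX * GX - FX ^ 2)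
    (hlam : lam = r ^ 2 / ‖X q - c‖ ^ 2) (heta : eta = ⟪UX, X q - c⟫)
    (hKX : KX = (eX * gX - fX ^ 2) / (EX * GX - FX ^ 2))
    (hHX : HX = (eX * GX - 2 * fX * FX + gX * EX) / (2 * (EX * GX - FX ^ 2)))
    (hKY : KY = (eY * gY - fY ^ 2) / (EY * GY - FY ^ 2))
    (hHY : HY = (eY * GY - 2 * fY * FY + gY * EY) / (2 * (EY * GY - FY ^ 2))) :
    HY = -lam⁻¹ * HX - 2 * eta / r ^ 2 :=
  inverse_surface_mean_curvature_general c r hr Φ hΦ X hX hXc Y hY q Xs Xu Xss Xsu Xuu Ys Yu Yss Ysu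
    Yuu UX UY hXs hXu hXss hXsu hXuu hYs hYu hYss hYsu hYuu hUXs hUXu hUY EX FX GX eX fX gX EY FY GY
    eY fY gY lam eta HX HY hEX hFX hGX heX hfX hgX hEY hFY hGY heY hfY hgY hreg hlam heta hHX hHY
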